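/- Let F : ℂ × ℝ^r → ℂ be continuous, holomorphic in the first variable, with F(δ, 0) = 0 and ∂_s F(δ, 0) ≠ 0. Suppose also F(s̄, θ) = conj(F(s, θ)) for all s, θ (Schwarz reflection symmetry), and F(s,θ) ≠ 0 whenever Re(s) > δ. Then for θ near 0, the unique zero φ(θ) of s ↦ F(s,θ) near δ (given by the implicit function theorem) is real and satisfies φ(θ) ≤ δ. -/

import Mathlib

/-! Locally uniform convergence of holomorphic functions carries over to their derivatives, so
`∂ₛF` is jointly continuous and, near `(δ, 0)`, every `F(·, θ)` differs from `s ↦ c s`,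
`c = ∂ₛF(δ, 0)`, by a map of Lipschitz constant `‖c‖ / 4`. Hence `F(·, θ)` is injective on a disc
around `δ`, and a zero depending on `θ` is automatically continuous. The symmetry makes `F` real on
the real axis and `c` real, so the intermediate value theorem on the real diameter of the disc
produces a zero, which is real; as `F` does not vanish on `Re s > δ`, it is at most `δ`. -/

open Complex ComplexConjugate Metric Filter Topology Set

theorem im_ofReal_eq_zero_of_conj_comm {f : ℂ → ℂ} (hf : ∀ s, f (conj s) = conj (f s)) (x : ℝ) :
    (f x).im = 0 := by
  rw [← conj_eq_iff_im, ← hf, conj_ofReal]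

theorem HasDerivAt.im_eq_zero_of_real {f : ℂ → ℂ} {c : ℂ} {x : ℝ} (hf : HasDerivAt f c x)
    (hreal : ∀ y : ℝ, (f y).im = 0) : c.im = 0 := by
  have h := imCLM.hasFDerivAt.comp_hasDerivAt x hf.comp_ofReal
  simp only [Function.comp_def, imCLM_apply, hreal] at h
  exact h.unique (hasDerivAt_const x 0)

theorem continuous_parametric_deriv {X : Type*} [TopologicalSpace X] {F : ℂ → X → ℂ}
    (hF : Continuous fun p : ℂ × X => F p.1 p.2) (hhol : ∀ θ, Differentiable ℂ (F · θ)) :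
    Continuous fun p : ℂ × X => deriv (F · p.2) p.1 := by
  refine continuous_iff_continuousAt.mpr fun ⟨z₀, θ₀⟩ => ?_
  have hunif : TendstoLocallyUniformly (fun θ s => F s θ) (F · θ₀) (𝓝 θ₀) :=
    ContinuousMap.tendsto_iff_tendstoLocallyUniformly.mp
      ((ContinuousMap.curry ⟨fun p : X × ℂ => F p.2 p.1, by fun_prop⟩).continuous.tendsto θ₀)
  have hderiv : TendstoLocallyUniformly (fun θ => deriv (F · θ)) (deriv (F · θ₀)) (𝓝 θ₀) := by
    rw [← tendstoLocallyUniformlyOn_univ] at hunif ⊢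
    exact hunif.deriv (.of_forall fun θ => (hhol θ).differentiableOn) isOpen_univ
  have hderiv' : TendstoLocallyUniformly (fun p : ℂ × X => deriv (F · p.2)) (deriv (F · θ₀))
      (𝓝 (z₀, θ₀)) := fun u hu z =>
    let ⟨t, ht, h⟩ := hderiv u hu z
    ⟨t, ht, (continuous_snd.tendsto (z₀, θ₀)).eventually h⟩
  exact hderiv'.tendsto_comp ((hhol θ₀).contDiff.continuous_deriv le_rfl).continuousAt
    continuousAt_fst

theorem Convex.norm_image_sub_sub_mul_le {𝕜 : Type*} [RCLike 𝕜] {f : 𝕜 → 𝕜} {s : Set 𝕜}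
    {c : 𝕜} {K : ℝ} (hs : Convex ℝ s) (hf : ∀ z ∈ s, DifferentiableAt 𝕜 f z)
    (hK : ∀ z ∈ s, ‖deriv f z - c‖ ≤ K) {z w : 𝕜} (hz : z ∈ s) (hw : w ∈ s) :
    ‖f z - f w - c * (z - w)‖ ≤ K * ‖z - w‖ := by
  have hg : ∀ y ∈ s, HasDerivAt (fun y => f y - c * y) (deriv f y - c) y := fun y hy => by
    have := (hf y hy).hasDerivAt.fun_sub ((hasDerivAt_id' y).const_mul c)
    rwa [mul_one] at this
  have := hs.norm_image_sub_le_of_norm_deriv_le (fun y hy => (hg y hy).differentiableAt)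
    (fun y hy => (hg y hy).deriv ▸ hK y hy) hw hz
  rwa [show f z - f w - c * (z - w) = f z - c * z - (f w - c * w) by ring]

theorem exists_forall_norm_sub_sub_mul_le {X : Type*} [PseudoMetricSpace X] {F : ℂ → X → ℂ}
    (hF : Continuous fun p : ℂ × X => F p.1 p.2) (hhol : ∀ θ, Differentiable ℂ (F · θ))
    (z₀ : ℂ) (θ₀ : X) {K : ℝ} (hK : 0 < K) :
    ∃ ρ > 0, ∀ θ ∈ ball θ₀ ρ, ∀ z ∈ ball z₀ ρ, ∀ w ∈ ball z₀ ρ,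
      ‖F z θ - F w θ - deriv (F · θ₀) z₀ * (z - w)‖ ≤ K * ‖z - w‖ := by
  obtain ⟨ρ, hρ, hderiv⟩ := Metric.continuousAt_iff.mp
    ((continuous_parametric_deriv hF hhol).continuousAt (x := (z₀, θ₀))) K hK
  refine ⟨ρ, hρ, fun θ hθ z hz w hw => (convex_ball z₀ ρ).norm_image_sub_sub_mul_le
    (fun y _ => hhol θ y) (fun y hy => ?_) hz hw⟩
  rw [← dist_eq_norm]
  exact (hderiv (x := (y, θ)) (by simpa [Prod.dist_eq] using ⟨hy, hθ⟩)).le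

theorem sub_mul_dist_le_dist_of_norm_sub_sub_mul_le {𝕜 : Type*} [NormedField 𝕜] {f : 𝕜 → 𝕜}
    {c z w : 𝕜} {K : ℝ} (h : ‖f z - f w - c * (z - w)‖ ≤ K * ‖z - w‖) :
    (‖c‖ - K) * dist z w ≤ dist (f z) (f w) := by
  have := norm_sub_le (f z - f w) (f z - f w - c * (z - w))
  rw [sub_sub_cancel, norm_mul] at this
  rw [dist_eq_norm, dist_eq_norm]
  linarith

theorem eq_of_apply_eq_zero_of_mul_dist_le {Y E : Type*} [MetricSpace Y]
    [PseudoMetricSpace E] [Zero E] {f : Y → E} {m : ℝ} {y y' : Y} (hm : 0 < m)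
    (hexp : m * dist y y' ≤ dist (f y) (f y')) (hy : f y = 0) (hy' : f y' = 0) : y = y' := by
  rw [hy, hy', dist_self] at hexp
  exact dist_le_zero.mp (nonpos_of_mul_nonpos_right hexp hm)

theorem continuousOn_of_apply_eq_zero_of_mul_dist_le {X Y E : Type*} [TopologicalSpace X]
    [PseudoMetricSpace Y] [SeminormedAddCommGroup E] {F : Y → X → E} {φ : X → Y} {U : Set X}
    {S : Set Y} {m : ℝ} (hm : 0 < m) (hF : ∀ y ∈ S, ContinuousOn (F y) U) (hφS : MapsTo φ U S)
    (hφ : ∀ θ ∈ U, F (φ θ) θ = 0)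
    (hexp : ∀ θ ∈ U, ∀ y ∈ S, ∀ y' ∈ S, m * dist y y' ≤ dist (F y θ) (F y' θ)) :
    ContinuousOn φ U := by
  intro θ₀ hθ₀
  have hbound : ∀ θ ∈ U, dist (φ θ) (φ θ₀) ≤ dist (F (φ θ₀) θ) (F (φ θ₀) θ₀) / m := by
    intro θ hθ
    rw [le_div_iff₀' hm, dist_comm (F _ θ), hφ θ₀ hθ₀, ← hφ θ hθ]
    exact hexp θ hθ _ (hφS hθ) _ (hφS hθ₀)
  have hlim : Tendsto (fun θ => dist (F (φ θ₀) θ) (F (φ θ₀) θ₀) / m) (𝓝[U] θ₀) (𝓝 0) := by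
    simpa using (((hF _ (hφS hθ₀)) θ₀ hθ₀).tendsto.dist
      (tendsto_const_nhds (x := F (φ θ₀) θ₀))).div_const m
  rw [ContinuousWithinAt, tendsto_iff_dist_tendsto_zero]
  exact squeeze_zero' (.of_forall fun _ => dist_nonneg)
    (eventually_nhdsWithin_of_forall hbound) hlim

theorem exists_mem_Ioo_eq_zero_of_abs_sub_sub_mul_le {g : ℝ → ℝ} {x₀ a c K : ℝ} (ha : 0 < a)
    (hg : ContinuousOn g (Icc (x₀ - a) (x₀ + a)))
    (happrox : ∀ x ∈ Icc (x₀ - a) (x₀ + a), |g x - g x₀ - c * (x - x₀)| ≤ K * |x - x₀|)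
    (hsmall : |g x₀| < (|c| - K) * a) :
    ∃ x ∈ Ioo (x₀ - a) (x₀ + a), g x = 0 := by
  have hle : x₀ - a ≤ x₀ + a := by linarith
  have hright := abs_le.mp (happrox _ (right_mem_Icc.mpr hle))
  have hleft := abs_le.mp (happrox _ (left_mem_Icc.mpr hle))
  have h0 := abs_lt.mp hsmall
  simp only [add_sub_cancel_left, sub_sub_cancel_left, abs_neg, abs_of_pos ha] at hright hleft
  rcases le_total 0 c with hc | hc
  · rw [abs_of_nonneg hc] at h0
    exact intermediate_value_Ioo hle hg ⟨by nlinarith, by nlinarith⟩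
  · rw [abs_of_nonpos hc] at h0
    exact intermediate_value_Ioo' hle hg ⟨by nlinarith, by nlinarith⟩

theorem exists_real_zero_of_norm_sub_sub_mul_le {f : ℂ → ℂ} {x₀ ρ K : ℝ} {c : ℂ} (hρ : 0 < ρ)
    (hf : Continuous f) (hreal : ∀ x : ℝ, (f x).im = 0) (hc : c.im = 0)
    (happrox : ∀ z ∈ ball (x₀ : ℂ) ρ, ‖f z - f x₀ - c * (z - x₀)‖ ≤ K * ‖z - x₀‖)
    (hsmall : ‖f x₀‖ < (‖c‖ - K) * (ρ / 2)) :
    ∃ x : ℝ, (x : ℂ) ∈ ball (x₀ : ℂ) ρ ∧ f x = 0 := by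
  have hnorm : ∀ x : ℝ, ‖(x : ℂ) - x₀‖ = |x - x₀| := fun x => by
    rw [← ofReal_sub, norm_real, Real.norm_eq_abs]
  have happrox_re : ∀ x ∈ Icc (x₀ - ρ / 2) (x₀ + ρ / 2),
      |(f x).re - (f x₀).re - c.re * (x - x₀)| ≤ K * |x - x₀| := by
    intro x hx
    have hx' : |x - x₀| ≤ ρ / 2 := abs_sub_le_iff.mpr ⟨by linarith [hx.2], by linarith [hx.1]⟩
    have h := happrox x (by rw [mem_ball, dist_eq_norm, hnorm]; linarith)
    rw [hnorm] at h
    refine le_trans (le_of_eq ?_) ((abs_re_le_norm _).trans h)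
    simp [hc]
  have hsmall_re : |(f x₀).re| < (|c.re| - K) * (ρ / 2) := by
    rw [abs_re_eq_norm.mpr hc]
    exact (abs_re_le_norm _).trans_lt hsmall
  obtain ⟨x, hx, hx0⟩ := exists_mem_Ioo_eq_zero_of_abs_sub_sub_mul_le (g := fun x : ℝ => (f x).re)
    (half_pos hρ) (by fun_prop) happrox_re hsmall_re
  refine ⟨x, ?_, Complex.ext hx0 (hreal x)⟩
  rw [mem_ball, dist_eq_norm, hnorm, abs_sub_lt_iff]
  constructor <;> linarith [hx.1, hx.2]

/-- Reality of the implicit zero: if `F` is continuous, holomorphic in `s`, has a simple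
zero at `(δ,0)`, satisfies the Schwarz symmetry `F(s̄,θ) = conj F(s,θ)` and does not
vanish on `{Re s > δ}`, then for `θ` near `0` the unique zero `φ(θ)` of `s ↦ F(s,θ)`
near `δ` is real and `φ(θ) ≤ δ`. -/
theorem stmt14 (r : ℕ) (δ : ℝ) (F : ℂ → (Fin r → ℝ) → ℂ)
    (hcont : Continuous fun p : ℂ × (Fin r → ℝ) => F p.1 p.2)
    (hhol : ∀ θ, Differentiable ℂ fun s => F s θ)
    (hF0 : F (δ : ℂ) 0 = 0)
    (hds : deriv (fun s => F s 0) (δ : ℂ) ≠ 0)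
    (hsym : ∀ s θ, F (starRingEnd ℂ s) θ = starRingEnd ℂ (F s θ))
    (hnz : ∀ s θ, δ < s.re → F s θ ≠ 0) :
    ∃ ε > (0 : ℝ), ∃ η > (0 : ℝ), ∃ φ : (Fin r → ℝ) → ℂ,
      ContinuousOn φ (Metric.ball (0 : Fin r → ℝ) η) ∧
      ∀ θ : Fin r → ℝ, ‖θ‖ < η →
        F (φ θ) θ = 0 ∧
        φ θ ∈ Metric.ball (δ : ℂ) ε ∧
        (∀ s ∈ Metric.ball (δ : ℂ) ε, F s θ = 0 → s = φ θ) ∧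
        (φ θ).im = 0 ∧
        (φ θ).re ≤ δ := by
  set c := deriv (fun s => F s 0) (δ : ℂ)
  have hc : 0 < ‖c‖ := norm_pos_iff.mpr hds
  have hreal : ∀ (x : ℝ) θ, (F x θ).im = 0 := fun x θ =>
    im_ofReal_eq_zero_of_conj_comm (f := (F · θ)) (hsym · θ) x
  have hc_real : c.im = 0 := ((hhol 0) δ).hasDerivAt.im_eq_zero_of_real (hreal · 0)
  have hFθ : ∀ s, Continuous (F s) := fun s => hcont.comp (.prodMk_right s)
  obtain ⟨ρ, hρ, happrox⟩ :=
    exists_forall_norm_sub_sub_mul_le hcont hhol (δ : ℂ) 0 (K := ‖c‖ / 4) (by positivity)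
  obtain ⟨η', hη', hsmall⟩ := Metric.continuousAt_iff.mp (hFθ δ).continuousAt
    (3 / 8 * ‖c‖ * ρ) (by positivity)
  set η := min ρ η'
  have hexp : ∀ θ ∈ ball (0 : Fin r → ℝ) η, ∀ z ∈ ball (δ : ℂ) ρ, ∀ w ∈ ball (δ : ℂ) ρ,
      3 / 4 * ‖c‖ * dist z w ≤ dist (F z θ) (F w θ) := fun θ hθ z hz w hw => by
    have := sub_mul_dist_le_dist_of_norm_sub_sub_mul_le (f := (F · θ))
      (happrox θ (ball_subset_ball (min_le_left _ _) hθ) z hz w hw)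
    linarith
  have hzero : ∀ θ ∈ ball (0 : Fin r → ℝ) η, ∃ x : ℝ, (x : ℂ) ∈ ball (δ : ℂ) ρ ∧ F x θ = 0 := by
    intro θ hθ
    have hFδ := hsmall (ball_subset_ball (min_le_right _ _) hθ)
    rw [hF0, dist_zero_right] at hFδ
    exact exists_real_zero_of_norm_sub_sub_mul_le (f := (F · θ)) hρ
      (hcont.comp (.prodMk_left θ)) (hreal · θ) hc_real
      (fun z hz => happrox θ (ball_subset_ball (min_le_left _ _) hθ) z hz δ (mem_ball_self hρ))
      (by linarith)
  choose! x hx_mem hx_zero using hzero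
  refine ⟨ρ, hρ, η, lt_min hρ hη', fun θ => x θ,
    continuousOn_of_apply_eq_zero_of_mul_dist_le (by positivity)
      (fun z _ => (hFθ z).continuousOn) hx_mem hx_zero hexp, fun θ hθ => ?_⟩
  rw [← mem_ball_zero_iff] at hθ
  refine ⟨hx_zero θ hθ, hx_mem θ hθ, fun s hs hs0 => ?_, ofReal_im _, ?_⟩
  · exact eq_of_apply_eq_zero_of_mul_dist_le (f := (F · θ)) (by positivity)
      (hexp θ hθ s hs _ (hx_mem θ hθ)) hs0 (hx_zero θ hθ)
  · by_contra! h
    exact hnz _ θ h (hx_zero θ hθ)
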